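/- Let r ≥ 1, m1,…,mr ≥ 1, m = m1+⋯+mr, γ = γ_{m1,…,mr}, let σ be a pairing of [m] and π a partition of [m] with #(π) = m/2 + 2 − r. Then σ ∈ NC_2(m1,…,mr) and π = 0_{γσ} if and only if the following two conditions hold: (i) 0_σ ∨ 0_γ = 1_m, and (ii) for every u ∈ [m], [u]_π = [γ(σ(u))]_π (for each block {u,v} of σ, the edges e_u and e_v join the same pair of blocks of π with opposite orientation). -/

import Mathlib

open Equiv

namespace WignerPaper

/-- The setoid (partition) of the orbits of a permutation. -/
def orbitSetoid {α : Type*} (σ : Equiv.Perm α) : Setoid α :=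
  ⟨σ.SameCycle,
    ⟨fun x => Equiv.Perm.SameCycle.refl σ x, fun h => h.symm, fun h h' => h.trans h'⟩⟩

/-- The number of blocks of a partition. -/
noncomputable def numBlocks {α : Type*} (s : Setoid α) : ℕ := Nat.card (Quotient s)

/-- The number of orbits of a permutation (fixed points count as orbits). -/
noncomputable def numOrbits {α : Type*} (σ : Equiv.Perm α) : ℕ :=
  numBlocks (orbitSetoid σ)

/-- The length `|U| = n − #(U)` of a partition of `Fin n`, as an integer. -/
noncomputable def setoidLength {n : ℕ} (s : Setoid (Fin n)) : ℤ :=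
  (n : ℤ) - numBlocks s

/-- The length `|σ| = n − #(σ)` of a permutation of `Fin n`, as an integer. -/
noncomputable def permLength {n : ℕ} (σ : Equiv.Perm (Fin n)) : ℤ :=
  (n : ℤ) - numOrbits σ

/-- A pairing is a fixed-point free involution. -/
def IsPairing {α : Type*} (σ : Equiv.Perm α) : Prop := σ * σ = 1 ∧ ∀ x, σ x ≠ x

/-- The `j`-th cycle (0-indexed) of `γ_{m1,…,mr}`, as a set. -/
def cyc (ms : List ℕ) (j : ℕ) : Set (Fin ms.sum) :=
  {u | (ms.take j).sum ≤ (u : ℕ) ∧ (u : ℕ) < (ms.take (j + 1)).sum}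

/-- The permutation `γ_{m1,…,mr}` with the `r` cycles
`(1,…,m1)(m1+1,…,m1+m2)⋯(m1+⋯+m_{r−1}+1,…,m)` (here 0-indexed on `Fin (m1+⋯+mr)`). -/
def annularPerm (ms : List ℕ) : Equiv.Perm (Fin ms.sum) :=
  ((List.range ms.length).map fun j =>
    ((List.finRange ms.sum).filter fun u : Fin ms.sum =>
      decide ((ms.take j).sum ≤ (u : ℕ) ∧ (u : ℕ) < (ms.take (j + 1)).sum)).formPerm).prod

/-- The annular non-crossing pairings `NC₂(m1,…,mr)`: pairings `σ` with
`0_σ ∨ 0_γ = 1_m` and `#(σ) + #(σ⁻¹γ) = m + 2 − r`. -/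
def NC2ann (ms : List ℕ) : Set (Equiv.Perm (Fin ms.sum)) :=
  {σ | IsPairing σ ∧ orbitSetoid σ ⊔ orbitSetoid (annularPerm ms) = ⊤ ∧
    numOrbits σ + numOrbits (σ⁻¹ * annularPerm ms) + ms.length = ms.sum + 2}

/-- `|NC₂(n)|`, with the convention `|NC₂(0)| = 1`. -/
noncomputable def NC2card (n : ℕ) : ℕ :=
  if n = 0 then 1 else Nat.card ↥(NC2ann [n])

/-- The partition `π̄`: `u ∼ v` iff the edges `e_u = ([γu]_π, [u]_π)` and
`e_v = ([γv]_π, [v]_π)` join the same unordered pair of blocks of `π`. -/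
def ebar {α : Type*} (γ : Equiv.Perm α) (π : Setoid α) : Setoid α :=
  Setoid.ker fun u => Sym2.mk (Quotient.mk π (γ u), Quotient.mk π u)

/-- The edges `e_u` and `e_v` have opposite orientation:
`[u]_π = [γv]_π` and `[v]_π = [γu]_π`. -/
def OppOr {α : Type*} (γ : Equiv.Perm α) (π : Setoid α) (u v : α) : Prop :=
  π.r u (γ v) ∧ π.r v (γ u)

/-- The block of `π̄` containing `u` is exactly `{u, v}`, with `u ≠ v`. -/
def TwinBlock {α : Type*} (γ : Equiv.Perm α) (π : Setoid α) (u v : α) : Prop :=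
  u ≠ v ∧ (ebar γ π).r u v ∧ ∀ w, (ebar γ π).r u w → w = u ∨ w = v

/-- The elementarization graph: the simple graph on the blocks of `π` where distinct
blocks `A`, `B` are adjacent iff some edge `e_u` joins `A` and `B`. -/
def elemGraph {α : Type*} (γ : Equiv.Perm α) (π : Setoid α) : SimpleGraph (Quotient π) where
  Adj A B := A ≠ B ∧ ∃ u,
    (Quotient.mk π (γ u) = A ∧ Quotient.mk π u = B) ∨
    (Quotient.mk π (γ u) = B ∧ Quotient.mk π u = A)
  symm := by
    refine ⟨?_⟩
    rintro A B ⟨hne, u, h⟩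
    exact ⟨hne.symm, u, h.symm⟩
  loopless := by refine ⟨?_⟩; rintro A ⟨hne, -⟩; exact hne rfl

/-- The smallest partition in which `u` and `v` lie in the same block. -/
def pairSetoid {α : Type*} (u v : α) : Setoid α :=
  sInf {s : Setoid α | s.r u v}

/-- Merge the block of `u` and the block of `v` in the partition `s`. -/
def mergeTwo {α : Type*} (s : Setoid α) (u v : α) : Setoid α := s ⊔ pairSetoid u v

/-- `z` and `z'` lie in a common cycle of `γ_{m1,…,mr}`. -/
def SameCycIdx (ms : List ℕ) (z z' : Fin ms.sum) : Prop :=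
  ∃ j, j < ms.length ∧ z ∈ cyc ms j ∧ z' ∈ cyc ms j

/-- The restriction of `π` to the single-cycle subset `C` is a non-crossing pairing. -/
def RestrictNC2Disc {m : ℕ} (γ π : Equiv.Perm (Fin m)) (C : Set (Fin m)) : Prop :=
  ∃ hπ : ∀ u, u ∈ C ↔ π u ∈ C,
    IsPairing (π.subtypePerm (p := (· ∈ C)) (fun u => (hπ u).symm)) ∧
    ∃ hγ : ∀ u, u ∈ C ↔ γ u ∈ C,
      numOrbits (π.subtypePerm (p := (· ∈ C)) (fun u => (hπ u).symm)) +
        numOrbits ((π.subtypePerm (p := (· ∈ C)) (fun u => (hπ u).symm))⁻¹ * γ.subtypePerm (p := (· ∈ C)) (fun u => (hγ u).symm)) = Nat.card C + 1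

/-- The restriction of `π` to the two-cycle subset `C` is an annular non-crossing pairing. -/
def RestrictNC2Ann {m : ℕ} (γ π : Equiv.Perm (Fin m)) (C : Set (Fin m)) : Prop :=
  ∃ hπ : ∀ u, u ∈ C ↔ π u ∈ C,
    IsPairing (π.subtypePerm (p := (· ∈ C)) (fun u => (hπ u).symm)) ∧
    ∃ hγ : ∀ u, u ∈ C ↔ γ u ∈ C,
      orbitSetoid (π.subtypePerm (p := (· ∈ C)) (fun u => (hπ u).symm)) ⊔ orbitSetoid (γ.subtypePerm (p := (· ∈ C)) (fun u => (hγ u).symm)) = ⊤ ∧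
      numOrbits (π.subtypePerm (p := (· ∈ C)) (fun u => (hπ u).symm)) +
        numOrbits ((π.subtypePerm (p := (· ∈ C)) (fun u => (hπ u).symm))⁻¹ * γ.subtypePerm (p := (· ∈ C)) (fun u => (hγ u).symm)) = Nat.card C

/-- The restriction of `π` to the single-cycle subset `C` is a non-crossing involution
with exactly one fixed point. -/
def RestrictNCOneFix {m : ℕ} (γ π : Equiv.Perm (Fin m)) (C : Set (Fin m)) : Prop :=
  ∃ hπ : ∀ u, u ∈ C ↔ π u ∈ C,
    (π.subtypePerm (p := (· ∈ C)) (fun u => (hπ u).symm)) * (π.subtypePerm (p := (· ∈ C)) (fun u => (hπ u).symm)) = 1 ∧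
    (∃! u : C, (π.subtypePerm (p := (· ∈ C)) (fun u => (hπ u).symm)) u = u) ∧
    ∃ hγ : ∀ u, u ∈ C ↔ γ u ∈ C,
      numOrbits (π.subtypePerm (p := (· ∈ C)) (fun u => (hπ u).symm)) +
        numOrbits ((π.subtypePerm (p := (· ∈ C)) (fun u => (hπ u).symm))⁻¹ * γ.subtypePerm (p := (· ∈ C)) (fun u => (hγ u).symm)) = Nat.card C + 1

/-- `PS^{(1,1,1)}_{NC₂}(m1,m2,m3)`: pairs `(V,π)` where `π` restricts to a non-crossing
pairing on each cycle and `V` merges one block of each of the three restrictions. -/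
def PS111 (m1 m2 m3 : ℕ) :
    Set (Setoid (Fin ([m1, m2, m3] : List ℕ).sum) ×
         Equiv.Perm (Fin ([m1, m2, m3] : List ℕ).sum)) :=
  {Vπ | IsPairing Vπ.2 ∧
    (∀ j, j < 3 → RestrictNC2Disc (annularPerm [m1, m2, m3]) Vπ.2 (cyc [m1, m2, m3] j)) ∧
    ∃ u1 ∈ cyc [m1, m2, m3] 0, ∃ u2 ∈ cyc [m1, m2, m3] 1, ∃ u3 ∈ cyc [m1, m2, m3] 2,
      Vπ.1 = mergeTwo (mergeTwo (orbitSetoid Vπ.2) u1 u2) u2 u3}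

/-- `PS^{(2,1,1)}_{NC₂}(m1,m2,m3)`: pairs `(V,π)` where `π` restricts to a non-crossing
pairing on each cycle and `V` merges two disjoint pairs of blocks of `π`, each pair
lying inside two different cycles, with `V ∨ 0_γ = 1_m`. -/
def PS211 (m1 m2 m3 : ℕ) :
    Set (Setoid (Fin ([m1, m2, m3] : List ℕ).sum) ×
         Equiv.Perm (Fin ([m1, m2, m3] : List ℕ).sum)) :=
  {Vπ | IsPairing Vπ.2 ∧
    (∀ j, j < 3 → RestrictNC2Disc (annularPerm [m1, m2, m3]) Vπ.2 (cyc [m1, m2, m3] j)) ∧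
    ∃ u1 v1 u2 v2,
      (∃ j j', j < 3 ∧ j' < 3 ∧ j ≠ j' ∧ u1 ∈ cyc [m1, m2, m3] j ∧ v1 ∈ cyc [m1, m2, m3] j') ∧
      (∃ j j', j < 3 ∧ j' < 3 ∧ j ≠ j' ∧ u2 ∈ cyc [m1, m2, m3] j ∧ v2 ∈ cyc [m1, m2, m3] j') ∧
      ¬ (orbitSetoid Vπ.2).r u1 u2 ∧ ¬ (orbitSetoid Vπ.2).r u1 v2 ∧
      ¬ (orbitSetoid Vπ.2).r v1 u2 ∧ ¬ (orbitSetoid Vπ.2).r v1 v2 ∧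
      Vπ.1 = mergeTwo (mergeTwo (orbitSetoid Vπ.2) u1 v1) u2 v2 ∧
      Vπ.1 ⊔ orbitSetoid (annularPerm [m1, m2, m3]) = ⊤}

/-- `PS^{(1,1)}_{NC₂}(m1,m2,m3)`: pairs `(V,π)` where `π` restricts to an annular
non-crossing pairing on a union of two cycles and a non-crossing pairing on the third,
and `V` merges one block of each of the two restrictions. -/
def PS11 (m1 m2 m3 : ℕ) :
    Set (Setoid (Fin ([m1, m2, m3] : List ℕ).sum) ×
         Equiv.Perm (Fin ([m1, m2, m3] : List ℕ).sum)) :=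
  {Vπ | ∃ i1 i2 i3 : ℕ, i1 < 3 ∧ i2 < 3 ∧ i3 < 3 ∧ i1 ≠ i2 ∧ i1 ≠ i3 ∧ i2 ≠ i3 ∧
    IsPairing Vπ.2 ∧
    RestrictNC2Ann (annularPerm [m1, m2, m3]) Vπ.2
      (cyc [m1, m2, m3] i1 ∪ cyc [m1, m2, m3] i2) ∧
    RestrictNC2Disc (annularPerm [m1, m2, m3]) Vπ.2 (cyc [m1, m2, m3] i3) ∧
    ∃ u ∈ cyc [m1, m2, m3] i1 ∪ cyc [m1, m2, m3] i2, ∃ v ∈ cyc [m1, m2, m3] i3,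
      Vπ.1 = mergeTwo (orbitSetoid Vπ.2) u v}

/-- `PS^{(1,1)}_{NC₂^{(2)}}(m1,m2,m3)`: elements of `PS^{(1,1)}_{NC₂}` whose annular
part has exactly two through strings. -/
def PS11TwoTS (m1 m2 m3 : ℕ) :
    Set (Setoid (Fin ([m1, m2, m3] : List ℕ).sum) ×
         Equiv.Perm (Fin ([m1, m2, m3] : List ℕ).sum)) :=
  {Vπ | ∃ i1 i2 i3 : ℕ, i1 < 3 ∧ i2 < 3 ∧ i3 < 3 ∧ i1 ≠ i2 ∧ i1 ≠ i3 ∧ i2 ≠ i3 ∧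
    IsPairing Vπ.2 ∧
    RestrictNC2Ann (annularPerm [m1, m2, m3]) Vπ.2
      (cyc [m1, m2, m3] i1 ∪ cyc [m1, m2, m3] i2) ∧
    RestrictNC2Disc (annularPerm [m1, m2, m3]) Vπ.2 (cyc [m1, m2, m3] i3) ∧
    Nat.card {w : Fin ([m1, m2, m3] : List ℕ).sum //
      w ∈ cyc [m1, m2, m3] i1 ∧ Vπ.2 w ∈ cyc [m1, m2, m3] i2} = 2 ∧
    ∃ u ∈ cyc [m1, m2, m3] i1 ∪ cyc [m1, m2, m3] i2, ∃ v ∈ cyc [m1, m2, m3] i3,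
      Vπ.1 = mergeTwo (orbitSetoid Vπ.2) u v}

/-- `PS^{(1,1)(t)}_{NC₂}(m1,m2,m3)`: elements of `PS^{(1,1)}_{NC₂}` whose annular part
has exactly one through string, the merged block of `V` consisting of that through
string together with a block of the disc part. -/
def PS11t (m1 m2 m3 : ℕ) :
    Set (Setoid (Fin ([m1, m2, m3] : List ℕ).sum) ×
         Equiv.Perm (Fin ([m1, m2, m3] : List ℕ).sum)) :=
  {Vπ | ∃ i1 i2 i3 : ℕ, i1 < 3 ∧ i2 < 3 ∧ i3 < 3 ∧ i1 ≠ i2 ∧ i1 ≠ i3 ∧ i2 ≠ i3 ∧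
    IsPairing Vπ.2 ∧
    RestrictNC2Ann (annularPerm [m1, m2, m3]) Vπ.2
      (cyc [m1, m2, m3] i1 ∪ cyc [m1, m2, m3] i2) ∧
    RestrictNC2Disc (annularPerm [m1, m2, m3]) Vπ.2 (cyc [m1, m2, m3] i3) ∧
    Nat.card {w : Fin ([m1, m2, m3] : List ℕ).sum //
      w ∈ cyc [m1, m2, m3] i1 ∧ Vπ.2 w ∈ cyc [m1, m2, m3] i2} = 1 ∧
    ∃ u, u ∈ cyc [m1, m2, m3] i1 ∧ Vπ.2 u ∈ cyc [m1, m2, m3] i2 ∧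
      ∃ v ∈ cyc [m1, m2, m3] i3, Vπ.1 = mergeTwo (orbitSetoid Vπ.2) u v}

/-- `PS^{(1,1,1)}_{NC_{2,1,1}}(m1,m2,m3)`: pairs `(V,π)` where `π` is an involution
restricting to a non-crossing involution with exactly one fixed point on two of the
cycles and a non-crossing pairing on the third, and `V` merges the two fixed points
together with one block of the pairing part into a single block. -/
def PS111Loop (m1 m2 m3 : ℕ) :
    Set (Setoid (Fin ([m1, m2, m3] : List ℕ).sum) ×
         Equiv.Perm (Fin ([m1, m2, m3] : List ℕ).sum)) :=
  {Vπ | ∃ i1 i2 i3 : ℕ, i1 < 3 ∧ i2 < 3 ∧ i3 < 3 ∧ i1 ≠ i2 ∧ i1 ≠ i3 ∧ i2 ≠ i3 ∧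
    Vπ.2 * Vπ.2 = 1 ∧
    RestrictNCOneFix (annularPerm [m1, m2, m3]) Vπ.2 (cyc [m1, m2, m3] i1) ∧
    RestrictNCOneFix (annularPerm [m1, m2, m3]) Vπ.2 (cyc [m1, m2, m3] i2) ∧
    RestrictNC2Disc (annularPerm [m1, m2, m3]) Vπ.2 (cyc [m1, m2, m3] i3) ∧
    ∃ f1 ∈ cyc [m1, m2, m3] i1, Vπ.2 f1 = f1 ∧
      ∃ f2 ∈ cyc [m1, m2, m3] i2, Vπ.2 f2 = f2 ∧
        ∃ w ∈ cyc [m1, m2, m3] i3,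
          Vπ.1 = mergeTwo (mergeTwo (orbitSetoid Vπ.2) f1 f2) f2 w}

/-- `π` is a double tree partition: no loops, every block of `π̄` consists of exactly
two elements whose edges have opposite orientation, and the elementarization graph
is a tree. -/
def IsDoubleTree {α : Type*} (γ : Equiv.Perm α) (π : Setoid α) : Prop :=
  (∀ u, ¬ π.r (γ u) u) ∧
  (∀ u, ∃ v, TwinBlock γ π u v ∧ OppOr γ π u v) ∧
  (elemGraph γ π).IsTree

/-- `π` is a double uniloop partition: exactly two elements `u ≠ v` have loop edges,
these lie at the same vertex, every other block of `π̄` consists of exactly two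
elements whose edges are non-loops of opposite orientation, and the elementarization
graph is a tree. -/
def IsDoubleUniloop {α : Type*} (γ : Equiv.Perm α) (π : Setoid α) : Prop :=
  (∃ u v, u ≠ v ∧ π.r (γ u) u ∧ π.r (γ v) v ∧ π.r u v ∧
    (∀ w, π.r (γ w) w → w = u ∨ w = v) ∧
    (∀ w, w ≠ u → w ≠ v → ∃ w', TwinBlock γ π w w' ∧
      ¬ π.r (γ w) w ∧ ¬ π.r (γ w') w' ∧ OppOr γ π w w')) ∧
  (elemGraph γ π).IsTree

/-- `π` is of 2-6 tree type. -/
def Is26TreeType (m1 m2 m3 : ℕ) (π : Setoid (Fin ([m1, m2, m3] : List ℕ).sum)) : Prop :=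
  (∀ u, ¬ π.r (annularPerm [m1, m2, m3] u) u) ∧
  (∃ u1 u2 v1 v2 w1 w2 : Fin ([m1, m2, m3] : List ℕ).sum,
    u1 ≠ u2 ∧ v1 ≠ v2 ∧ w1 ≠ w2 ∧
    u1 ∈ cyc [m1, m2, m3] 0 ∧ u2 ∈ cyc [m1, m2, m3] 0 ∧
    v1 ∈ cyc [m1, m2, m3] 1 ∧ v2 ∈ cyc [m1, m2, m3] 1 ∧
    w1 ∈ cyc [m1, m2, m3] 2 ∧ w2 ∈ cyc [m1, m2, m3] 2 ∧
    (ebar (annularPerm [m1, m2, m3]) π).r u1 u2 ∧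
    (ebar (annularPerm [m1, m2, m3]) π).r u1 v1 ∧
    (ebar (annularPerm [m1, m2, m3]) π).r u1 v2 ∧
    (ebar (annularPerm [m1, m2, m3]) π).r u1 w1 ∧
    (ebar (annularPerm [m1, m2, m3]) π).r u1 w2 ∧
    (∀ z, (ebar (annularPerm [m1, m2, m3]) π).r u1 z →
      z = u1 ∨ z = u2 ∨ z = v1 ∨ z = v2 ∨ z = w1 ∨ z = w2) ∧
    OppOr (annularPerm [m1, m2, m3]) π u1 u2 ∧
    OppOr (annularPerm [m1, m2, m3]) π v1 v2 ∧
    OppOr (annularPerm [m1, m2, m3]) π w1 w2 ∧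
    (∀ z, z ≠ u1 → z ≠ u2 → z ≠ v1 → z ≠ v2 → z ≠ w1 → z ≠ w2 →
      ∃ z', TwinBlock (annularPerm [m1, m2, m3]) π z z' ∧
        SameCycIdx [m1, m2, m3] z z' ∧ OppOr (annularPerm [m1, m2, m3]) π z z')) ∧
  (elemGraph (annularPerm [m1, m2, m3]) π).IsTree

/-- `π` is of 2-4-4 tree type. -/
def Is244TreeType (m1 m2 m3 : ℕ) (π : Setoid (Fin ([m1, m2, m3] : List ℕ).sum)) : Prop :=
  (∀ u, ¬ π.r (annularPerm [m1, m2, m3] u) u) ∧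
  (∃ (a b c d : ℕ) (u1 u2 v1 v2 u3 u4 v3 v4 : Fin ([m1, m2, m3] : List ℕ).sum),
    a < 3 ∧ b < 3 ∧ a ≠ b ∧ c < 3 ∧ d < 3 ∧ c ≠ d ∧
    u1 ≠ u2 ∧ v1 ≠ v2 ∧ u3 ≠ u4 ∧ v3 ≠ v4 ∧
    u1 ∈ cyc [m1, m2, m3] a ∧ u2 ∈ cyc [m1, m2, m3] a ∧
    v1 ∈ cyc [m1, m2, m3] b ∧ v2 ∈ cyc [m1, m2, m3] b ∧
    u3 ∈ cyc [m1, m2, m3] c ∧ u4 ∈ cyc [m1, m2, m3] c ∧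
    v3 ∈ cyc [m1, m2, m3] d ∧ v4 ∈ cyc [m1, m2, m3] d ∧
    (ebar (annularPerm [m1, m2, m3]) π).r u1 u2 ∧
    (ebar (annularPerm [m1, m2, m3]) π).r u1 v1 ∧
    (ebar (annularPerm [m1, m2, m3]) π).r u1 v2 ∧
    (∀ z, (ebar (annularPerm [m1, m2, m3]) π).r u1 z →
      z = u1 ∨ z = u2 ∨ z = v1 ∨ z = v2) ∧
    (ebar (annularPerm [m1, m2, m3]) π).r u3 u4 ∧
    (ebar (annularPerm [m1, m2, m3]) π).r u3 v3 ∧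
    (ebar (annularPerm [m1, m2, m3]) π).r u3 v4 ∧
    (∀ z, (ebar (annularPerm [m1, m2, m3]) π).r u3 z →
      z = u3 ∨ z = u4 ∨ z = v3 ∨ z = v4) ∧
    ¬ (ebar (annularPerm [m1, m2, m3]) π).r u1 u3 ∧
    OppOr (annularPerm [m1, m2, m3]) π u1 u2 ∧
    OppOr (annularPerm [m1, m2, m3]) π v1 v2 ∧
    OppOr (annularPerm [m1, m2, m3]) π u3 u4 ∧
    OppOr (annularPerm [m1, m2, m3]) π v3 v4 ∧
    (∀ z, z ≠ u1 → z ≠ u2 → z ≠ v1 → z ≠ v2 → z ≠ u3 → z ≠ u4 → z ≠ v3 → z ≠ v4 →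
      ∃ z', TwinBlock (annularPerm [m1, m2, m3]) π z z' ∧
        SameCycIdx [m1, m2, m3] z z' ∧ OppOr (annularPerm [m1, m2, m3]) π z z')) ∧
  (ebar (annularPerm [m1, m2, m3]) π ⊔ orbitSetoid (annularPerm [m1, m2, m3]) = ⊤) ∧
  (elemGraph (annularPerm [m1, m2, m3]) π).IsTree

/-- The transposition exchanging the two entries of an unordered pair. -/
def sym2Swap {α : Type*} [DecidableEq α] : Sym2 α → Equiv.Perm α :=
  Sym2.lift ⟨fun a b => Equiv.swap a b, fun a b => Equiv.swap_comm a b⟩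

section Basics

variable {α : Type*}

lemma pair_rel (a b : α) : (pairSetoid a b).r a b := by
  intro s hs; exact hs

lemma pair_le {a b : α} {s : Setoid α} (h : s.r a b) : pairSetoid a b ≤ s :=
  sInf_le h

/-- explicit description of `s ⊔ pairSetoid a b` -/
def eset (s : Setoid α) (a b : α) : Setoid α where
  r x y := s.r x y ∨ (s.r x a ∧ s.r b y) ∨ (s.r x b ∧ s.r a y)
  iseqv := by
    constructor
    · intro x; exact Or.inl (s.refl x)
    · rintro x y (h | ⟨h1, h2⟩ | ⟨h1, h2⟩)
      · exact Or.inl (s.symm h)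
      · exact Or.inr (Or.inr ⟨s.symm h2, s.symm h1⟩)
      · exact Or.inr (Or.inl ⟨s.symm h2, s.symm h1⟩)
    · rintro x y z (h | ⟨h1, h2⟩ | ⟨h1, h2⟩) (h' | ⟨h1', h2'⟩ | ⟨h1', h2'⟩)
      · exact Or.inl (s.trans h h')
      · exact Or.inr (Or.inl ⟨s.trans h h1', h2'⟩)
      · exact Or.inr (Or.inr ⟨s.trans h h1', h2'⟩)
      · exact Or.inr (Or.inl ⟨h1, s.trans h2 h'⟩)
      · exact Or.inl (s.trans h1 (s.trans (s.symm (s.trans h2 h1')) h2'))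
      · exact Or.inl (s.trans h1 h2')
      · exact Or.inr (Or.inr ⟨h1, s.trans h2 h'⟩)
      · exact Or.inl (s.trans h1 h2')
      · exact Or.inl (s.trans h1 (s.trans (s.symm (s.trans h2 h1')) h2'))
  -- may need fixing

lemma eset_eq (s : Setoid α) (a b : α) : s ⊔ pairSetoid a b = eset s a b := by
  apply le_antisymm
  · apply sup_le
    · intro x y h; exact Or.inl h
    · apply pair_le
      exact Or.inr (Or.inl ⟨s.refl a, s.refl b⟩)
  · rw [Setoid.le_def]
    intro x y h
    have hs : s ≤ s ⊔ pairSetoid a b := le_sup_left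
    have hp : pairSetoid a b ≤ s ⊔ pairSetoid a b := le_sup_right
    have hab : (s ⊔ pairSetoid a b).r a b := Setoid.le_def.mp hp (pair_rel a b)
    have hs' : ∀ {x y}, s.r x y → (s ⊔ pairSetoid a b).r x y := fun h => Setoid.le_def.mp hs h
    rcases h with h | ⟨h1, h2⟩ | ⟨h1, h2⟩
    · exact hs' h
    · exact Setoid.trans' _ (Setoid.trans' _ (hs' h1) hab) (hs' h2)
    · exact Setoid.trans' _ (Setoid.trans' _ (hs' h1) (Setoid.symm' _ hab)) (hs' h2)


def qmap {s t : Setoid α} (h : s ≤ t) : Quotient s → Quotient t :=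
  Quotient.lift Quotient.mk'' (fun _ _ hxy => Quotient.eq''.mpr (Setoid.le_def.mp h hxy))

lemma qmap_surj {s t : Setoid α} (h : s ≤ t) : Function.Surjective (qmap h) := by
  intro q; induction q using Quotient.ind
  exact ⟨Quotient.mk'' _, rfl⟩

lemma numBlocks_le_of_le [Finite α] {s t : Setoid α} (h : s ≤ t) :
    numBlocks t ≤ numBlocks s :=
  Nat.card_le_card_of_surjective _ (qmap_surj h)

lemma eq_of_le_of_numBlocks_le [Finite α] {s t : Setoid α} (h : s ≤ t)
    (hc : numBlocks s ≤ numBlocks t) : s = t := by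
  have hb : Function.Bijective (qmap h) :=
    (Nat.bijective_iff_surjective_and_card _).mpr
      ⟨qmap_surj h, le_antisymm hc (numBlocks_le_of_le h)⟩
  refine le_antisymm h ?_
  rw [Setoid.le_def]
  intro x y hxy
  have : qmap h (Quotient.mk'' x) = qmap h (Quotient.mk'' y) := by
    show Quotient.mk'' x = Quotient.mk'' y
    exact Quotient.eq''.mpr hxy
  exact Quotient.eq''.mp (hb.injective this)

open Classical in
noncomputable def mergeMap (s : Setoid α) (a b : α) :
    Quotient s → (Quotient (s ⊔ pairSetoid a b)) ⊕ Unit :=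
  Quotient.lift
    (fun x => if s.r x b then Sum.inr () else Sum.inl (Quotient.mk'' x))
    (by
      intro x y hxy
      by_cases hx : s.r x b
      · have hy : s.r y b := s.trans (s.symm hxy) hx
        rw [if_pos hx, if_pos hy]
      · have hy : ¬ s.r y b := fun hy => hx (s.trans hxy hy)
        rw [if_neg hx, if_neg hy]
        exact congrArg _ (Quotient.eq''.mpr (Setoid.le_def.mp le_sup_left hxy)))

open Classical in
lemma mergeMap_inj (s : Setoid α) (a b : α) : Function.Injective (mergeMap s a b) := by
  intro p q hpq
  induction p using Quotient.ind with | _ x => ?_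
  induction q using Quotient.ind with | _ y => ?_
  replace hpq :
      (if s.r x b then Sum.inr () else Sum.inl (Quotient.mk'' x) :
        (Quotient (s ⊔ pairSetoid a b)) ⊕ Unit) =
      (if s.r y b then Sum.inr () else Sum.inl (Quotient.mk'' y)) := hpq
  show Quotient.mk'' x = Quotient.mk'' y
  by_cases hx : s.r x b <;> by_cases hy : s.r y b
  · exact Quotient.eq''.mpr (s.trans hx (s.symm hy))
  · rw [if_pos hx, if_neg hy] at hpq; exact absurd hpq (by simp)
  · rw [if_neg hx, if_pos hy] at hpq; exact absurd hpq (by simp)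
  · rw [if_neg hx, if_neg hy] at hpq
    have hj : (s ⊔ pairSetoid a b).r x y := Quotient.eq''.mp (Sum.inl.inj hpq)
    rw [eset_eq] at hj
    rcases hj with h | ⟨h1, h2⟩ | ⟨h1, h2⟩
    · exact Quotient.eq''.mpr h
    · exact absurd (s.symm h2) hy
    · exact absurd h1 hx

open Classical in
lemma mergeMap_surj (s : Setoid α) (a b : α) (hnab : ¬ s.r a b) :
    Function.Surjective (mergeMap s a b) := by
  rintro (q | u)
  · induction q using Quotient.ind with | _ x => ?_
    by_cases hx : s.r x b
    · refine ⟨Quotient.mk'' a, ?_⟩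
      show (if s.r a b then Sum.inr () else Sum.inl (Quotient.mk'' a) :
        (Quotient (s ⊔ pairSetoid a b)) ⊕ Unit) = _
      rw [if_neg hnab]
      refine congrArg _ ?_
      refine Quotient.eq''.mpr ?_
      rw [eset_eq]
      exact Or.inr (Or.inl ⟨s.refl a, s.symm hx⟩)
    · refine ⟨Quotient.mk'' x, ?_⟩
      show (if s.r x b then Sum.inr () else Sum.inl (Quotient.mk'' x) :
        (Quotient (s ⊔ pairSetoid a b)) ⊕ Unit) = _
      rw [if_neg hx]
  · refine ⟨Quotient.mk'' b, ?_⟩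
    show (if s.r b b then Sum.inr () else Sum.inl (Quotient.mk'' b) :
        (Quotient (s ⊔ pairSetoid a b)) ⊕ Unit) = _
    have hbb : s.r b b := s.refl b
    rw [if_pos hbb]

lemma numBlocks_le_sup_pair [Finite α] (s : Setoid α) (a b : α) :
    numBlocks s ≤ numBlocks (s ⊔ pairSetoid a b) + 1 := by
  have := Nat.card_le_card_of_injective _ (mergeMap_inj s a b)
  simpa [numBlocks, Nat.card_sum] using this

lemma numBlocks_sup_pair [Finite α] {s : Setoid α} {a b : α} (h : ¬ s.r a b) :
    numBlocks s = numBlocks (s ⊔ pairSetoid a b) + 1 := by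
  have := Nat.card_eq_of_bijective _ ⟨mergeMap_inj s a b, mergeMap_surj s a b h⟩
  simpa [numBlocks, Nat.card_sum] using this

end Basics


section Orbits

variable {α : Type*}

lemma orbit_le {f : Perm α} {R : Setoid α} (h : ∀ x, R.r x (f x)) :
    orbitSetoid f ≤ R := by
  rw [Setoid.le_def]
  rintro x y ⟨k, hk⟩
  have hnat : ∀ (z : α) (n : ℕ), R.r z ((f ^ n) z) := by
    intro z n
    induction n with
    | zero => simpa using R.refl z
    | succ n ih =>
        have h2 := h ((f ^ n) z)
        have : (f ^ (n + 1)) z = f ((f ^ n) z) := by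
          rw [pow_succ', Equiv.Perm.mul_apply]
        rw [this]
        exact R.trans ih h2
  rcases k with n | n
  · rw [Int.ofNat_eq_coe, zpow_natCast] at hk
    exact hk ▸ hnat x n
  · rw [zpow_negSucc] at hk
    have hx : x = (f ^ (n + 1)) y := by
      rw [← hk]; simp
    exact R.symm (hx ▸ hnat y (n + 1))

lemma orbit_rel_apply (f : Perm α) (x : α) : (orbitSetoid f).r x (f x) := ⟨1, by simp⟩

lemma orbitSetoid_inv (f : Perm α) : orbitSetoid f⁻¹ = orbitSetoid f :=
  Setoid.ext fun _ _ => Perm.sameCycle_inv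

lemma orbitSetoid_one : orbitSetoid (1 : Perm α) = ⊥ :=
  Setoid.ext fun _ _ => Perm.sameCycle_one

lemma numBlocks_bot : numBlocks (⊥ : Setoid α) = Nat.card α := by
  refine Nat.card_eq_of_bijective (Quotient.lift (id : α → α) fun a b h => h) ⟨?_, ?_⟩
  · intro p q
    induction p using Quotient.ind with | _ x => ?_
    induction q using Quotient.ind with | _ y => ?_
    intro h
    exact Quotient.eq''.mpr (h : x = y)
  · intro x; exact ⟨Quotient.mk'' x, rfl⟩

lemma numBlocks_top [Nonempty α] : numBlocks (⊤ : Setoid α) = 1 := by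
  have hsub : Subsingleton (Quotient (⊤ : Setoid α)) := by
    constructor
    intro p q
    induction p using Quotient.ind with | _ x => ?_
    induction q using Quotient.ind with | _ y => ?_
    exact Quotient.eq''.mpr trivial
  rw [numBlocks, Nat.card_eq_one_iff_unique]
  exact ⟨hsub, ⟨Quotient.mk'' (Classical.arbitrary α)⟩⟩

lemma numOrbits_conj (f g : Perm α) : numOrbits (g * f * g⁻¹) = numOrbits f := by
  refine (Nat.card_congr (Quotient.congr (g : α ≃ α) fun a b => ?_)).symm
  show f.SameCycle a b ↔ (g * f * g⁻¹).SameCycle (g a) (g b)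
  rw [Perm.sameCycle_conj]
  simp

lemma rel_swap_apply [DecidableEq α] {R : Setoid α} {a b : α}
    (hab : R.r a b) (z : α) : R.r z (Equiv.swap a b z) := by
  rcases eq_or_ne z a with rfl | hza
  · rw [Equiv.swap_apply_left]; exact hab
  rcases eq_or_ne z b with rfl | hzb
  · rw [Equiv.swap_apply_right]; exact R.symm hab
  · rw [Equiv.swap_apply_of_ne_of_ne hza hzb]

lemma orbit_mul_swap_le [DecidableEq α] (f : Perm α) (a b : α) :
    orbitSetoid (f * Equiv.swap a b) ≤ orbitSetoid f ⊔ pairSetoid a b := by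
  apply orbit_le
  intro x
  set R := orbitSetoid f ⊔ pairSetoid a b with hR
  have hab : R.r a b := Setoid.le_def.mp le_sup_right (pair_rel a b)
  have h1 : R.r x (Equiv.swap a b x) := rel_swap_apply hab x
  have h2 : R.r (Equiv.swap a b x) (f (Equiv.swap a b x)) :=
    Setoid.le_def.mp le_sup_left (orbit_rel_apply f _)
  exact R.trans h1 h2

lemma orbit_swap_mul_le [DecidableEq α] (f : Perm α) (a b : α) :
    orbitSetoid (Equiv.swap a b * f) ≤ orbitSetoid f ⊔ pairSetoid a b := by
  apply orbit_le
  intro x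
  set R := orbitSetoid f ⊔ pairSetoid a b with hR
  have hab : R.r a b := Setoid.le_def.mp le_sup_right (pair_rel a b)
  have h1 : R.r x (f x) := Setoid.le_def.mp le_sup_left (orbit_rel_apply f _)
  exact R.trans h1 (rel_swap_apply hab (f x))

lemma orbit_mul_le (f g : Perm α) :
    orbitSetoid (f * g) ≤ orbitSetoid f ⊔ orbitSetoid g := by
  apply orbit_le
  intro x
  have h1 : (orbitSetoid f ⊔ orbitSetoid g).r x (g x) :=
    Setoid.le_def.mp le_sup_right (orbit_rel_apply g x)
  have h2 : (orbitSetoid f ⊔ orbitSetoid g).r (g x) (f (g x)) :=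
    Setoid.le_def.mp le_sup_left (orbit_rel_apply f _)
  exact Setoid.trans' _ h1 h2

lemma sameCycle_swap_mul [Finite α] [DecidableEq α] {f : Perm α} {a b : α}
    (h : ¬ f.SameCycle a b) : (Equiv.swap a b * f).SameCycle a b := by
  by_contra hc
  set F := Equiv.swap a b * f with hF
  have key : ∀ k : ℕ, (F⁻¹ ^ (k + 1)) b = (f⁻¹ ^ (k + 1)) a := by
    intro k
    induction k with
    | zero =>
        show (F⁻¹ ^ 1) b = (f⁻¹ ^ 1) a
        rw [pow_one, pow_one, hF, mul_inv_rev, Equiv.swap_inv, Equiv.Perm.mul_apply,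
          Equiv.swap_apply_right]
    | succ k ih =>
        have hz1 : (f⁻¹ ^ (k + 1)) a ≠ a := by
          intro hz
          exact hc ((Perm.sameCycle_inv.mp ⟨(k + 1 : ℕ), by rw [zpow_natCast, ih, hz]⟩).symm)
        have hz2 : (f⁻¹ ^ (k + 1)) a ≠ b := by
          intro hz
          exact h (Perm.sameCycle_inv.mp ⟨(k + 1 : ℕ), by rw [zpow_natCast, hz]⟩)
        have : (F⁻¹ ^ (k + 1 + 1)) b = F⁻¹ ((F⁻¹ ^ (k + 1)) b) := by
          rw [pow_succ', Equiv.Perm.mul_apply]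
        rw [this, ih, hF, mul_inv_rev, Equiv.swap_inv, Equiv.Perm.mul_apply,
          Equiv.swap_apply_of_ne_of_ne hz1 hz2, ← Equiv.Perm.mul_apply, ← pow_succ']
  have hord : 0 < orderOf f⁻¹ := orderOf_pos f⁻¹
  obtain ⟨n, hn⟩ : ∃ n, orderOf f⁻¹ = n + 1 := ⟨orderOf f⁻¹ - 1, by omega⟩
  have : (F⁻¹ ^ (n + 1)) b = a := by
    rw [key n, ← hn, pow_orderOf_eq_one f⁻¹]; rfl
  exact hc (Perm.sameCycle_inv.mp ⟨(n + 1 : ℕ), by rw [zpow_natCast, this]⟩).symm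

lemma sameCycle_mul_swap [Finite α] [DecidableEq α] {f : Perm α} {a b : α}
    (h : ¬ f.SameCycle a b) : (f * Equiv.swap a b).SameCycle a b := by
  have h' : ¬ f⁻¹.SameCycle a b := by rwa [Perm.sameCycle_inv]
  have h2 := sameCycle_swap_mul h'
  have he : f * Equiv.swap a b = (Equiv.swap a b * f⁻¹)⁻¹ := by
    rw [mul_inv_rev, inv_inv, Equiv.swap_inv]
  rw [he]
  exact Perm.sameCycle_inv.mpr h2

end Orbits


section Key

theorem key_aux {m : ℕ} :
    ∀ (n : ℕ) (σ γ : Perm (Fin m)), σ.support.card ≤ n →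
      numOrbits σ + numOrbits (σ⁻¹ * γ) + numOrbits γ ≤
        m + 2 * numBlocks (orbitSetoid σ ⊔ orbitSetoid γ) := by
  intro n
  induction n with
  | zero =>
      intro σ γ hcard
      have hσ : σ = 1 := by
        rw [← Equiv.Perm.support_eq_empty_iff]
        exact Finset.card_eq_zero.mp (Nat.le_zero.mp hcard)
      subst hσ
      rw [inv_one, one_mul, orbitSetoid_one, bot_sup_eq]
      have h1 : numOrbits (1 : Perm (Fin m)) = m := by
        rw [numOrbits, orbitSetoid_one, numBlocks_bot, Nat.card_eq_fintype_card,
          Fintype.card_fin]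
      rw [h1]
      have h2 : numOrbits γ = numBlocks (orbitSetoid γ) := rfl
      omega
  | succ n ih =>
      intro σ γ hcard
      by_cases hσ1 : σ = 1
      · subst hσ1
        rw [inv_one, one_mul, orbitSetoid_one, bot_sup_eq]
        have h1 : numOrbits (1 : Perm (Fin m)) = m := by
          rw [numOrbits, orbitSetoid_one, numBlocks_bot, Nat.card_eq_fintype_card,
            Fintype.card_fin]
        rw [h1]
        have h2 : numOrbits γ = numBlocks (orbitSetoid γ) := rfl
        omega
      obtain ⟨a, ha⟩ : ∃ a, σ a ≠ a := by
        by_contra hall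
        push_neg at hall
        exact hσ1 (Equiv.ext hall)
      set b := σ a with hb
      have hab : a ≠ b := fun h => ha h.symm
      set τ := Equiv.swap a b with hτ
      set σ' := σ * τ with hσ'
      have hττ : τ * τ = 1 := by rw [hτ]; exact Equiv.swap_mul_self a b
      have hσστ : σ' * τ = σ := by rw [hσ', mul_assoc, hττ, mul_one]
      have hbfix : σ' b = b := by
        rw [hσ', Equiv.Perm.mul_apply, hτ, Equiv.swap_apply_right, hb]
      have hbsupp : b ∈ σ.support := by
        rw [Equiv.Perm.mem_support]
        intro hσb
        exact hab (σ.injective (by rw [← hb, hσb]))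
      have hsupp : σ'.support ⊆ σ.support.erase b := by
        intro z hz
        rw [Equiv.Perm.mem_support] at hz
        rcases eq_or_ne z b with rfl | hzb
        · exact absurd hbfix hz
        rw [Finset.mem_erase]
        refine ⟨hzb, ?_⟩
        rw [Equiv.Perm.mem_support]
        rcases eq_or_ne z a with rfl | hza
        · exact ha
        · intro hσz
          apply hz
          rw [hσ', Equiv.Perm.mul_apply, hτ, Equiv.swap_apply_of_ne_of_ne hza hzb, hσz]
      have hcard' : σ'.support.card ≤ n := by
        have h1 := Finset.card_le_card hsupp
        have h2 : (σ.support.erase b).card = σ.support.card - 1 :=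
          Finset.card_erase_of_mem hbsupp
        omega
      have hnsc : ¬ σ'.SameCycle a b := by
        intro hsc
        obtain ⟨k, hk⟩ := hsc.symm
        rw [Perm.zpow_apply_eq_self_of_apply_eq_self hbfix] at hk
        exact hab hk.symm
      have hple : pairSetoid a b ≤ orbitSetoid σ := pair_le (hb ▸ orbit_rel_apply σ a)
      have hσ'le : orbitSetoid σ' ≤ orbitSetoid σ := by
        have h1 := orbit_mul_swap_le σ a b
        rw [← hτ, ← hσ'] at h1
        rwa [sup_eq_left.mpr hple] at h1
      have horb_eq : orbitSetoid σ = orbitSetoid σ' ⊔ pairSetoid a b := by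
        apply le_antisymm
        · have h1 := orbit_mul_swap_le σ' a b
          rwa [← hτ, hσστ] at h1
        · exact sup_le hσ'le hple
      have hnum : numOrbits σ + 1 = numOrbits σ' := by
        have h1 : numOrbits σ' = numBlocks (orbitSetoid σ' ⊔ pairSetoid a b) + 1 :=
          numBlocks_sup_pair hnsc
        rw [h1, numOrbits, horb_eq]
      set ρ := σ'⁻¹ * γ with hρ
      set ρ₂ := σ⁻¹ * γ with hρ₂
      have hρ₂eq : ρ₂ = τ * ρ := by
        rw [hρ₂, hρ, ← hσστ, mul_inv_rev, hτ, Equiv.swap_inv, mul_assoc]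
      have hρτρ₂ : τ * ρ₂ = ρ := by
        rw [hρ₂eq, ← mul_assoc, hττ, one_mul]
      have hρle : orbitSetoid ρ ≤ orbitSetoid ρ₂ ⊔ pairSetoid a b := by
        have h1 := orbit_swap_mul_le ρ₂ a b
        rwa [← hτ, hρτρ₂] at h1
      set J := orbitSetoid σ ⊔ orbitSetoid γ with hJ
      set J' := orbitSetoid σ' ⊔ orbitSetoid γ with hJ'
      have hJ'J : J' ≤ J := sup_le_sup_right hσ'le _
      have hJle : J ≤ J' ⊔ pairSetoid a b := by
        rw [hJ, horb_eq]
        apply sup_le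
        · apply sup_le
          · exact le_trans (le_sup_left : orbitSetoid σ' ≤ J') le_sup_left
          · exact le_sup_right
        · exact le_trans (le_sup_right : orbitSetoid γ ≤ J') le_sup_left
      have hIH := ih σ' γ hcard'
      rw [← hρ, ← hJ'] at hIH
      by_cases hsc : ρ.SameCycle a b
      · -- same cycle : J = J', #ρ₂ ≤ #ρ + 1
        have hρJ' : orbitSetoid ρ ≤ J' := by
          have h1 := orbit_mul_le σ'⁻¹ γ
          rwa [← hρ, orbitSetoid_inv, ← hJ'] at h1
        have hpJ' : pairSetoid a b ≤ J' := pair_le (Setoid.le_def.mp hρJ' hsc)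
        have hJJ' : J = J' := le_antisymm (by rwa [sup_eq_left.mpr hpJ'] at hJle) hJ'J
        have hc1 : numOrbits ρ₂ ≤ numBlocks (orbitSetoid ρ₂ ⊔ pairSetoid a b) + 1 :=
          numBlocks_le_sup_pair _ a b
        have hc2 : numBlocks (orbitSetoid ρ₂ ⊔ pairSetoid a b) ≤ numOrbits ρ :=
          numBlocks_le_of_le hρle
        rw [hJ] at *
        rw [hJJ']
        omega
      · -- different cycles : #ρ₂ + 1 ≤ #ρ, #J' ≤ #J + 1
        have hpair2 : ρ₂.SameCycle a b := by
          rw [hρ₂eq]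
          exact sameCycle_swap_mul hsc
        have hρ₂pair : orbitSetoid ρ₂ ⊔ pairSetoid a b = orbitSetoid ρ₂ :=
          sup_eq_left.mpr (pair_le hpair2)
        have hρle2 : orbitSetoid ρ ⊔ pairSetoid a b ≤ orbitSetoid ρ₂ :=
          sup_le (by rwa [hρ₂pair] at hρle) (pair_le hpair2)
        have hc1 : numOrbits ρ₂ ≤ numBlocks (orbitSetoid ρ ⊔ pairSetoid a b) :=
          numBlocks_le_of_le hρle2
        have hc2 : numOrbits ρ = numBlocks (orbitSetoid ρ ⊔ pairSetoid a b) + 1 :=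
          numBlocks_sup_pair hsc
        have hc3 : numBlocks J' ≤ numBlocks (J' ⊔ pairSetoid a b) + 1 :=
          numBlocks_le_sup_pair _ a b
        have hc4 : numBlocks (J' ⊔ pairSetoid a b) ≤ numBlocks J :=
          numBlocks_le_of_le hJle
        omega

theorem key {m : ℕ} (σ γ : Perm (Fin m)) :
    numOrbits σ + numOrbits (σ⁻¹ * γ) + numOrbits γ ≤
      m + 2 * numBlocks (orbitSetoid σ ⊔ orbitSetoid γ) :=
  key_aux σ.support.card σ γ le_rfl

end Key


section Pairing

variable {α : Type*}

lemma sameCycle_pairing {σ : Perm α} (h : IsPairing σ) {x y : α} :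
    σ.SameCycle x y ↔ y = x ∨ y = σ x := by
  constructor
  · rintro ⟨k, hk⟩
    have hσ2 : σ ^ (2 : ℤ) = 1 := by
      have : σ ^ (2 : ℤ) = σ * σ := by
        rw [show (2 : ℤ) = ((2 : ℕ) : ℤ) from rfl, zpow_natCast, sq]
      rw [this, h.1]
    rcases Int.even_or_odd k with ⟨t, ht⟩ | ⟨t, ht⟩
    · left
      rw [← hk, ht, ← two_mul, zpow_mul, hσ2, one_zpow]
      rfl
    · right
      rw [← hk, ht, zpow_add, zpow_mul, hσ2, one_zpow, one_mul, zpow_one]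
  · rintro (rfl | rfl)
    · exact ⟨0, by simp⟩
    · exact ⟨1, by simp⟩

open Classical in
lemma two_mul_numOrbits_pairing [Finite α] {σ : Perm α} (h : IsPairing σ) :
    2 * numOrbits σ = Nat.card α := by
  have hbij : Function.Bijective
      (fun p : Quotient (orbitSetoid σ) × Bool =>
        if p.2 then σ p.1.out else p.1.out) := by
    constructor
    · rintro ⟨p, i⟩ ⟨q, j⟩ hpq
      dsimp only at hpq
      have hout : ∀ (p q : Quotient (orbitSetoid σ)), p.out = q.out → p = q := by
        intro p q hh
        rw [← Quotient.out_eq p, ← Quotient.out_eq q, hh]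
      rcases i <;> rcases j
      · rw [if_neg (by simp), if_neg (by simp)] at hpq
        rw [hout _ _ hpq]
      · rw [if_neg (by simp), if_pos rfl] at hpq
        -- p.out = σ q.out
        exfalso
        have hsc : σ.SameCycle q.out p.out := ⟨1, by simp [hpq]⟩
        have : q = p := by
          rw [← Quotient.out_eq p, ← Quotient.out_eq q]
          exact Quotient.eq''.mpr hsc
        rw [this] at hpq
        exact h.2 p.out hpq.symm
      · rw [if_pos rfl, if_neg (by simp)] at hpq
        exfalso
        have hsc : σ.SameCycle p.out q.out := ⟨1, by simp [← hpq]⟩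
        have : p = q := by
          rw [← Quotient.out_eq p, ← Quotient.out_eq q]
          exact Quotient.eq''.mpr hsc
        rw [this] at hpq
        exact h.2 q.out hpq
      · rw [if_pos rfl, if_pos rfl] at hpq
        rw [hout _ _ (σ.injective hpq)]
    · intro z
      set q : Quotient (orbitSetoid σ) := Quotient.mk'' z with hq
      have hsc : σ.SameCycle q.out z := Quotient.mk_out (s := orbitSetoid σ) z
      rcases (sameCycle_pairing h).mp hsc with h1 | h1
      · exact ⟨⟨q, false⟩, by simp [h1.symm]⟩
      · exact ⟨⟨q, true⟩, by simp [h1.symm]⟩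
  have := Nat.card_eq_of_bijective _ hbij
  rw [Nat.card_prod] at this
  simp only [Nat.card_eq_fintype_card, Fintype.card_bool] at this
  rw [← this, numOrbits, numBlocks]
  ring

end Pairing


section Annular

variable (ms : List ℕ)

def Tk (j : ℕ) : ℕ := (ms.take j).sum

def cl (j : ℕ) : List (Fin ms.sum) :=
  (List.finRange ms.sum).filter fun u : Fin ms.sum =>
    decide ((ms.take j).sum ≤ (u : ℕ) ∧ (u : ℕ) < (ms.take (j + 1)).sum)

lemma annularPerm_eq :
    annularPerm ms = ((List.range ms.length).map fun j => (cl ms j).formPerm).prod := rfl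

lemma mem_cl {j : ℕ} {u : Fin ms.sum} :
    u ∈ cl ms j ↔ (Tk ms j ≤ (u : ℕ) ∧ (u : ℕ) < Tk ms (j + 1)) := by
  simp [cl, List.mem_filter, List.mem_finRange, Tk]

lemma nodup_cl (j : ℕ) : (cl ms j).Nodup :=
  List.Nodup.filter _ (List.nodup_finRange _)

lemma Tk_zero : Tk ms 0 = 0 := rfl

lemma Tk_succ {j : ℕ} (h : j < ms.length) : Tk ms (j + 1) = Tk ms j + ms[j] := by
  rw [Tk, Tk, List.sum_take_succ _ _ h]

lemma Tk_mono : Monotone (Tk ms) := by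
  apply monotone_nat_of_le_succ
  intro j
  by_cases h : j < ms.length
  · rw [Tk_succ ms h]; omega
  · rw [Tk, Tk, List.take_of_length_le (by omega), List.take_of_length_le (by omega)]

lemma Tk_length : Tk ms ms.length = ms.sum := by rw [Tk, List.take_length]

lemma Tk_of_ge {j : ℕ} (h : ms.length ≤ j) : Tk ms j = ms.sum := by
  rw [Tk, List.take_of_length_le h]

lemma Tk_strict (hms : ∀ a ∈ ms, 1 ≤ a) {j : ℕ} (h : j < ms.length) :
    Tk ms j < Tk ms (j + 1) := by
  rw [Tk_succ ms h]
  have := hms ms[j] (List.getElem_mem h)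
  omega

lemma idx_ex (u : Fin ms.sum) : ∃ j, (u : ℕ) < Tk ms (j + 1) := by
  refine ⟨ms.length, ?_⟩
  have h1 : Tk ms ms.length ≤ Tk ms (ms.length + 1) := Tk_mono ms (by omega)
  have h2 : (u : ℕ) < Tk ms ms.length := by rw [Tk_length]; exact u.isLt
  omega

noncomputable def idx (u : Fin ms.sum) : ℕ := Nat.find (idx_ex ms u)

lemma idx_spec1 (u : Fin ms.sum) : (u : ℕ) < Tk ms (idx ms u + 1) :=
  Nat.find_spec (idx_ex ms u)

lemma idx_spec2 (u : Fin ms.sum) : Tk ms (idx ms u) ≤ (u : ℕ) := by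
  rcases h : idx ms u with _ | k
  · rw [Tk_zero]; omega
  · have := Nat.find_min (idx_ex ms u) (m := k)
      (by rw [show Nat.find (idx_ex ms u) = idx ms u from rfl, h]; omega)
    simpa using this

lemma idx_lt (u : Fin ms.sum) : idx ms u < ms.length := by
  by_contra hc
  push_neg at hc
  have h1 := idx_spec2 ms u
  rw [Tk_of_ge ms hc] at h1
  have := u.isLt
  omega

lemma mem_cl_idx (u : Fin ms.sum) : u ∈ cl ms (idx ms u) :=
  (mem_cl ms).mpr ⟨idx_spec2 ms u, idx_spec1 ms u⟩

lemma idx_unique {j : ℕ} {u : Fin ms.sum} (h : u ∈ cl ms j) : j = idx ms u := by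
  rw [mem_cl] at h
  by_contra hne
  rcases Nat.lt_or_ge j (idx ms u) with hlt | hge
  · have := Nat.find_min (idx_ex ms u) (m := j) hlt
    exact this h.2
  · have hlt : idx ms u < j := by omega
    have h2 : Tk ms (idx ms u + 1) ≤ Tk ms j := Tk_mono ms hlt
    have h3 := idx_spec1 ms u
    omega

lemma prod_apply_mem (js : List ℕ) (hnd : js.Nodup) (j : ℕ) (u : Fin ms.sum)
    (hu : u ∈ cl ms j) :
    ((js.map fun i => (cl ms i).formPerm).prod) u =
      if j ∈ js then (cl ms j).formPerm u else u := by
  induction js with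
  | nil => simp
  | cons i js ih =>
      obtain ⟨hi_nin, hnd'⟩ := List.nodup_cons.mp hnd
      rw [List.map_cons, List.prod_cons, Equiv.Perm.mul_apply, ih hnd']
      by_cases hj : j ∈ js
      · rw [if_pos hj, if_pos (List.mem_cons.mpr (Or.inr hj))]
        have hij : i ≠ j := fun h => hi_nin (h ▸ hj)
        have hmem : (cl ms j).formPerm u ∈ cl ms j := List.formPerm_apply_mem_of_mem hu
        have hnin : (cl ms j).formPerm u ∉ cl ms i := by
          intro hc
          exact hij ((idx_unique ms hc).trans (idx_unique ms hmem).symm)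
        rw [List.formPerm_apply_of_notMem hnin]
      · rw [if_neg hj]
        rcases eq_or_ne i j with rfl | hij
        · rw [if_pos (List.mem_cons.mpr (Or.inl rfl))]
        · rw [if_neg (by simp [List.mem_cons, hij.symm, hj])]
          have hnin : u ∉ cl ms i := by
            intro hc
            exact hij ((idx_unique ms hc).trans (idx_unique ms hu).symm)
          rw [List.formPerm_apply_of_notMem hnin]

lemma annular_apply (u : Fin ms.sum) :
    annularPerm ms u = (cl ms (idx ms u)).formPerm u := by
  rw [annularPerm_eq, prod_apply_mem ms _ List.nodup_range _ u (mem_cl_idx ms u),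
    if_pos (List.mem_range.mpr (idx_lt ms u))]

lemma annular_mem (u : Fin ms.sum) : annularPerm ms u ∈ cl ms (idx ms u) := by
  rw [annular_apply]
  exact List.formPerm_apply_mem_of_mem (mem_cl_idx ms u)

lemma idx_annular (u : Fin ms.sum) : idx ms (annularPerm ms u) = idx ms u :=
  (idx_unique ms (annular_mem ms u)).symm

noncomputable def idxF (u : Fin ms.sum) : Fin ms.length := ⟨idx ms u, idx_lt ms u⟩

lemma orbit_le_ker : orbitSetoid (annularPerm ms) ≤ Setoid.ker (idxF ms) :=
  orbit_le fun u => Setoid.ker_def.mpr (Fin.ext (idx_annular ms u).symm)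

lemma annular_pow (j : ℕ) (u : Fin ms.sum) (hu : u ∈ cl ms j) (n : ℕ) :
    (annularPerm ms ^ n) u = ((cl ms j).formPerm ^ n) u ∧
      ((cl ms j).formPerm ^ n) u ∈ cl ms j := by
  induction n with
  | zero => simpa using hu
  | succ n ih =>
      have h1 : (annularPerm ms ^ (n + 1)) u = annularPerm ms ((annularPerm ms ^ n) u) := by
        rw [pow_succ', Equiv.Perm.mul_apply]
      have h2 : ((cl ms j).formPerm ^ (n + 1)) u =
          (cl ms j).formPerm (((cl ms j).formPerm ^ n) u) := by
        rw [pow_succ', Equiv.Perm.mul_apply]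
      constructor
      · rw [h1, ih.1, h2]
        rw [annular_apply, ← idx_unique ms ih.2]
      · rw [h2]
        exact List.formPerm_apply_mem_of_mem ih.2

lemma ker_le_orbit : Setoid.ker (idxF ms) ≤ orbitSetoid (annularPerm ms) := by
  rw [Setoid.le_def]
  intro u v h
  rw [Setoid.ker_def] at h
  have hj : idx ms u = idx ms v := congrArg Fin.val h
  set j := idx ms u with hjdef
  have hu : u ∈ cl ms j := mem_cl_idx ms u
  have hv : v ∈ cl ms j := hj ▸ mem_cl_idx ms v
  obtain ⟨i, hi, hiu⟩ := List.getElem_of_mem hu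
  obtain ⟨i', hi', hiv⟩ := List.getElem_of_mem hv
  refine ⟨((i' + (cl ms j).length - i : ℕ) : ℤ), ?_⟩
  rw [zpow_natCast, (annular_pow ms j u hu _).1, ← hiu,
    List.formPerm_pow_apply_getElem _ (nodup_cl ms j)]
  have hmod : (i + (i' + (cl ms j).length - i)) % (cl ms j).length = i' := by
    rw [show i + (i' + (cl ms j).length - i) = i' + (cl ms j).length by omega,
      Nat.add_mod_right]
    exact Nat.mod_eq_of_lt hi'
  simp only [hmod]
  exact hiv

lemma numOrbits_annular (hms : ∀ a ∈ ms, 1 ≤ a) :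
    numOrbits (annularPerm ms) = ms.length := by
  have heq : orbitSetoid (annularPerm ms) = Setoid.ker (idxF ms) :=
    le_antisymm (orbit_le_ker ms) (ker_le_orbit ms)
  rw [numOrbits, numBlocks, heq]
  have hsurj : Function.Surjective (idxF ms) := by
    intro j
    have hne : Tk ms (j : ℕ) < ms.sum := by
      have h1 := Tk_strict ms hms j.isLt
      have h2 : Tk ms ((j : ℕ) + 1) ≤ Tk ms ms.length := Tk_mono ms j.isLt
      rw [Tk_length] at h2
      omega
    refine ⟨⟨Tk ms (j : ℕ), hne⟩, ?_⟩
    apply Fin.ext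
    show idx ms _ = (j : ℕ)
    refine (idx_unique ms ?_).symm
    rw [mem_cl]
    exact ⟨le_refl _, Tk_strict ms hms j.isLt⟩
  have := Nat.card_congr (Setoid.quotientKerEquivRange (idxF ms))
  rw [this]
  rw [Set.range_eq_univ.mpr hsurj]
  rw [Nat.card_congr (Equiv.Set.univ _), Nat.card_eq_fintype_card, Fintype.card_fin]

end Annular


/-- characterization of pairs `(σ, π)` with `σ ∈ NC₂(m1,…,mr)` and
`π = 0_{γσ}`, for `π` with `#(π) = m/2 + 2 − r`. -/
theorem statement11 (ms : List ℕ) (hr : 1 ≤ ms.length) (hms : ∀ a ∈ ms, 1 ≤ a)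
    (γ σ : Equiv.Perm (Fin ms.sum)) (hγ : γ = annularPerm ms)
    (hpair : IsPairing σ) (π : Setoid (Fin ms.sum))
    (hcard : 2 * numBlocks π + 2 * ms.length = ms.sum + 4) :
    (σ ∈ NC2ann ms ∧ π = orbitSetoid (γ * σ)) ↔
      (orbitSetoid σ ⊔ orbitSetoid γ = ⊤ ∧ ∀ u, π.r u (γ (σ u))) := by
  subst hγ
  have hmpos : 1 ≤ ms.sum := by
    obtain ⟨a, ha⟩ : ∃ a, a ∈ ms := by
      rcases ms with _ | ⟨a, tl⟩
      · simp at hr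
      · exact ⟨a, List.mem_cons_self⟩
    have h1 := hms a ha
    have h2 := List.single_le_sum (fun x _ => Nat.zero_le x) a ha
    omega
  haveI : Nonempty (Fin ms.sum) := ⟨⟨0, by omega⟩⟩
  constructor
  · rintro ⟨⟨hp, hjoin, hcount⟩, hπ⟩
    refine ⟨hjoin, fun u => ?_⟩
    rw [hπ]
    have := orbit_rel_apply (annularPerm ms * σ) u
    rwa [Equiv.Perm.mul_apply] at this
  · rintro ⟨hjoin, hrel⟩
    have hle : orbitSetoid (annularPerm ms * σ) ≤ π := by
      apply orbit_le
      intro u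
      have := hrel u
      rwa [← Equiv.Perm.mul_apply] at this
    have h1 : numBlocks π ≤ numOrbits (annularPerm ms * σ) := numBlocks_le_of_le hle
    have hinv : σ⁻¹ = σ := inv_eq_of_mul_eq_one_right hpair.1
    have hconj : numOrbits (σ⁻¹ * annularPerm ms) = numOrbits (annularPerm ms * σ) := by
      rw [hinv]
      have h2 : annularPerm ms * (σ * annularPerm ms) * (annularPerm ms)⁻¹ =
          annularPerm ms * σ := by group
      rw [← h2, numOrbits_conj]
    have hkey := key σ (annularPerm ms)
    rw [hjoin, numBlocks_top, numOrbits_annular ms hms] at hkey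
    have hpairct := two_mul_numOrbits_pairing hpair
    rw [Nat.card_eq_fintype_card, Fintype.card_fin] at hpairct
    have hdef : numOrbits (annularPerm ms * σ) =
        numBlocks (orbitSetoid (annularPerm ms * σ)) := rfl
    have hπeq : π = orbitSetoid (annularPerm ms * σ) :=
      (eq_of_le_of_numBlocks_le hle (by omega)).symm
    exact ⟨⟨hpair, hjoin, by omega⟩, hπeq⟩


end WignerPaper
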